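/- arXiv:1903.04286 — 2 statements merged into one kernel-verified Lean document; each statement's English description precedes it below -/
import Mathlib

section
/- If G is a finite connected graph with diameter at most 2, then every independent set of G is a general position set; consequently gp(G) ≥ α(G), where α(G) is the independence number of G. -/
namespace SimpleGraph

variable {V : Type*}

/-- `S` is a general position set of `G`: no vertex of `S` lies on a geodesic
(shortest path) between two other vertices of `S`. -/
def IsGPSet (G : SimpleGraph V) (S : Set V) : Prop :=
  ∀ ⦃u v w : V⦄, u ∈ S → v ∈ S → w ∈ S → u ≠ v → u ≠ w → v ≠ w →
    ∀ p : G.Walk u v, p.IsPath → p.length = G.dist u v → w ∉ p.support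

/-- The general position number of `G`: the maximum cardinality of a general
position set of `G`. -/
noncomputable def gpNumber (G : SimpleGraph V) : ℕ :=
  sSup {n | ∃ S : Set V, G.IsGPSet S ∧ n = S.ncard}

/-- `ρ(G)`: the maximum number of vertices in a union of pairwise independent
complete subgraphs of `G`, where complete subgraphs `Q`, `Q'` are independent
if `d_G(u,u') ≥ 2` for every `u ∈ Q` and `u' ∈ Q'`. -/
noncomputable def rho (G : SimpleGraph V) : ℕ :=
  sSup {n | ∃ 𝒬 : Finset (Finset V),
    (∀ Q ∈ 𝒬, G.IsClique (Q : Set V)) ∧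
    (∀ Q ∈ 𝒬, ∀ Q' ∈ 𝒬, Q ≠ Q' → ∀ u ∈ Q, ∀ u' ∈ Q', 2 ≤ G.edist u u') ∧
    n = (⋃ Q ∈ 𝒬, (Q : Set V)).ncard}

/-- A graph is complete multipartite iff non-adjacency is transitive. -/
def IsCompleteMultipartite₀ (G : SimpleGraph V) : Prop := Transitive (¬G.Adj · ·)

/-- `η(G)`: the maximum order of an induced complete multipartite subgraph of
the complement of `G`. -/
noncomputable def eta (G : SimpleGraph V) : ℕ :=
  sSup {n | ∃ B : Set V, (Gᶜ.induce B).IsCompleteMultipartite₀ ∧ n = B.ncard}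

/-- An independent set of a graph. -/
def IsIndepSet₀ (G : SimpleGraph V) (S : Set V) : Prop :=
  S.Pairwise fun u v => ¬ G.Adj u v

/-- The independence number `α(G)`. -/
noncomputable def indepNum₀ (G : SimpleGraph V) : ℕ :=
  sSup {n | ∃ S : Set V, G.IsIndepSet₀ S ∧ n = S.ncard}

end SimpleGraph

/-- The Kneser graph `K(n,k)`: vertices are the `k`-element subsets of an
`n`-element set, two vertices adjacent iff the corresponding sets are disjoint. -/
def kneserGraph (n k : ℕ) : SimpleGraph {s : Finset (Fin n) // s.card = k} where
  Adj a b := Disjoint a.1 b.1 ∧ a ≠ b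
  symm := by
    refine ⟨?_⟩
    rintro a b ⟨h1, h2⟩
    exact ⟨h1.symm, h2.symm⟩
  loopless := by
    refine ⟨?_⟩
    rintro a ⟨-, h⟩
    exact h rfl

namespace SimpleGraph

variable {V : Type*} {G : SimpleGraph V}

theorem Walk.adj_of_mem_support_of_length_eq_two {u v w : V} (p : G.Walk u v)
    (hp : p.length = 2) (hw : w ∈ p.support) (hwu : w ≠ u) (hwv : w ≠ v) : G.Adj u w := by
  match p, hp with
  | .cons h (.cons _ .nil), _ =>
    simp only [Walk.support_cons, Walk.support_nil, List.mem_cons, List.not_mem_nil,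
      or_false] at hw
    rcases hw with rfl | rfl | rfl
    · exact absurd rfl hwu
    · exact h
    · exact absurd rfl hwv

theorem dist_eq_two_of_not_adj {u v : V} (h : G.edist u v ≤ 2) (huv : u ≠ v)
    (hadj : ¬ G.Adj u v) : G.dist u v = 2 := by
  have h0 : G.edist u v ≠ 0 := by rwa [Ne, edist_eq_zero_iff]
  have h1 : G.edist u v ≠ 1 := by rwa [Ne, edist_eq_one_iff_adj]
  suffices G.edist u v = 2 by simp [dist, this]
  generalize G.edist u v = d at *
  induction d using ENat.recTopCoe with
  | top => simp at h
  | coe n => norm_cast at *; omega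

theorem IsIndepSet₀.isGPSet_of_ediam_le_two {S : Set V} (hS : G.IsIndepSet₀ S)
    (hdiam : G.ediam ≤ 2) : G.IsGPSet S := by
  intro u v w hu hv hw huv huw hvw p _ hlen hwp
  have hdist : G.dist u v = 2 :=
    dist_eq_two_of_not_adj (edist_le_ediam.trans hdiam) huv (hS hu hv huv)
  exact hS hu hw huw <|
    p.adj_of_mem_support_of_length_eq_two (hlen.trans hdist) hwp huw.symm hvw.symm

theorem indepNum₀_le_gpNumber_of_forall_isGPSet [Finite V]
    (h : ∀ S : Set V, G.IsIndepSet₀ S → G.IsGPSet S) : G.indepNum₀ ≤ G.gpNumber := by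
  refine csSup_le_csSup ⟨Nat.card V, ?_⟩ ⟨0, ∅, by simp [IsIndepSet₀]⟩ ?_
  · rintro n ⟨S, -, rfl⟩
    exact Set.ncard_le_card S
  · rintro n ⟨S, hS, rfl⟩
    exact ⟨S, h S hS, rfl⟩

end SimpleGraph

theorem isGPSet_of_isIndepSet_of_diam_le_two_general {V : Type*} [Fintype V]
    (G : SimpleGraph V) (hdiam : G.ediam ≤ 2) :
    (∀ S : Set V, G.IsIndepSet₀ S → G.IsGPSet S) ∧ G.indepNum₀ ≤ G.gpNumber := by
  have hgp : ∀ S : Set V, G.IsIndepSet₀ S → G.IsGPSet S :=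
    fun _ hS => hS.isGPSet_of_ediam_le_two hdiam
  exact ⟨hgp, SimpleGraph.indepNum₀_le_gpNumber_of_forall_isGPSet hgp⟩

/-- If `G` is a finite connected graph of diameter at most `2`, then every
independent set of `G` is a general position set, and consequently
`gp(G) ≥ α(G)`. -/
theorem isGPSet_of_isIndepSet_of_diam_le_two {V : Type*} [Fintype V]
    (G : SimpleGraph V) (hconn : G.Connected) (hdiam : G.ediam ≤ 2) :
    (∀ S : Set V, G.IsIndepSet₀ S → G.IsGPSet S) ∧ G.indepNum₀ ≤ G.gpNumber :=
  isGPSet_of_isIndepSet_of_diam_le_two_general G hdiam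
end

section
/- For every integer n ≥ 3, the general position number of the line graph of the complete graph K_n equals n if 3 divides n, and equals n − 1 if 3 does not divide n. -/
/-!
The line graph of `K_n` has diameter at most two, so a set `S` of edges of `K_n` is in general
position exactly when "sharing an endpoint" is transitive on `S`, i.e. when the edges of `S` form
vertex-disjoint stars and triangles. Sending each edge of `S` to an endpoint that lies on no other
edge of `S`, or failing that to the third vertex of its triangle, is injective, so `|S| ≤ n`.
This injection misses a vertex as soon as some edge has such a pendant endpoint; otherwise `S`
consists of disjoint triangles and `3 ∣ |S|`. Hence `|S| ≤ n - 1` unless `3 ∣ n`. Conversely, the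
triangles on the blocks `{3i, 3i+1, 3i+2}` give `n` edges when `3 ∣ n`, and a star gives `n - 1`.
-/

namespace SimpleGraph

variable {V : Type*} {G : SimpleGraph V}

theorem gpNumber_eq_of_exists_of_forall_le {k : ℕ} (hk : ∃ S, G.IsGPSet S ∧ S.ncard = k)
    (hle : ∀ S, G.IsGPSet S → S.ncard ≤ k) : G.gpNumber = k := by
  refine IsGreatest.csSup_eq ⟨?_, ?_⟩
  · obtain ⟨S, hS, rfl⟩ := hk
    exact ⟨S, hS, rfl⟩
  · rintro _ ⟨S, hS, rfl⟩
    exact hle S hS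

theorem IsGPSet.adj_of_adj_of_adj {S : Set V} (hS : G.IsGPSet S) {u v w : V} (hu : u ∈ S)
    (hv : v ∈ S) (hw : w ∈ S) (huv : u ≠ v) (huw : G.Adj u w) (hwv : G.Adj w v) :
    G.Adj u v := by
  by_contra hnadj
  let p : G.Walk u v := .cons huw (.cons hwv .nil)
  have hdist : G.dist u v = 2 := by
    have hle : G.dist u v ≤ 2 := dist_le p
    have hne0 : G.dist u v ≠ 0 := by simpa using ⟨huv, ⟨p⟩⟩
    have hne1 : G.dist u v ≠ 1 := by rwa [Ne, dist_eq_one_iff_adj]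
    omega
  refine hS hu hv hw huv huw.ne hwv.ne.symm p ?_ (by simp [p, hdist]) (by simp [p])
  simp [p, huw.ne, hwv.ne, huv]

theorem isGPSet_of_forall_dist_le_two {S : Set V} (hdiam : ∀ u v, G.dist u v ≤ 2)
    (htrans : ∀ ⦃u v w⦄, u ∈ S → v ∈ S → w ∈ S → u ≠ v → G.Adj u w → G.Adj w v → G.Adj u v) :
    G.IsGPSet S := by
  intro u v w hu hv hw huv huw hvw p _ hlen hwp
  match p, hlen, hwp with
  | .nil, _, _ => exact huv rfl
  | .cons _ .nil, _, hwp =>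
    exact (by simpa using hwp : w = u ∨ w = v).elim (huw ·.symm) (hvw ·.symm)
  | .cons h₁ (.cons h₂ .nil), hlen, hwp =>
    simp only [Walk.support_cons, Walk.support_nil, List.mem_cons, huw.symm, hvw.symm,
      List.not_mem_nil, or_false, false_or] at hwp
    subst hwp
    simp [dist_eq_one_iff_adj.2 (htrans hu hv hw huv h₁ h₂)] at hlen
  | .cons _ (.cons _ (.cons _ _)), hlen, _ =>
    have := hdiam u v
    simp only [Walk.length_cons] at hlen
    omega

theorem lineGraph_eq_or_adj_of_mem {e f : G.edgeSet} {x : V} (he : x ∈ (e : Sym2 V))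
    (hf : x ∈ (f : Sym2 V)) : e = f ∨ G.lineGraph.Adj e f := by
  by_cases h : e = f
  · exact .inl h
  · exact .inr (lineGraph_adj_iff_exists.2 ⟨h, x, he, hf⟩)

theorem dist_lineGraph_top_le_two (e f : (⊤ : SimpleGraph V).edgeSet) :
    (⊤ : SimpleGraph V).lineGraph.dist e f ≤ 2 := by
  have dist_le_one {e f : (⊤ : SimpleGraph V).edgeSet} {x : V} (he : x ∈ (e : Sym2 V))
      (hf : x ∈ (f : Sym2 V)) : (⊤ : SimpleGraph V).lineGraph.dist e f ≤ 1 := by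
    rcases lineGraph_eq_or_adj_of_mem he hf with rfl | h
    · simp
    · exact (dist_eq_one_iff_adj.2 h).le
  set a := (e : Sym2 V).out.1
  set c := (f : Sym2 V).out.1
  have ha : a ∈ (e : Sym2 V) := Sym2.out_fst_mem _
  have hc : c ∈ (f : Sym2 V) := Sym2.out_fst_mem _
  by_cases hac : a = c
  · exact (dist_le_one ha (hac ▸ hc)).trans (by norm_num)
  let m : (⊤ : SimpleGraph V).edgeSet := ⟨s(a, c), by simpa using hac⟩
  have hem : (⊤ : SimpleGraph V).lineGraph.Reachable e m := by
    rcases lineGraph_eq_or_adj_of_mem (f := m) ha (Sym2.mem_mk_left a c) with h | h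
    · exact h ▸ Reachable.refl _
    · exact h.reachable
  calc _ ≤ _ := hem.dist_triangle_left f
    _ ≤ 1 + 1 := add_le_add (dist_le_one ha (Sym2.mem_mk_left a c))
        (dist_le_one (Sym2.mem_mk_right a c) hc)

end SimpleGraph

open Finset in
theorem Finset.dvd_card_of_card_filter_eq {ι : Type*} {s : Finset ι} {r : ι → ι → Prop}
    [DecidableRel r] {k : ℕ} (refl : ∀ x ∈ s, r x x) (symm : ∀ x ∈ s, ∀ y ∈ s, r x y → r y x)
    (trans : ∀ x ∈ s, ∀ y ∈ s, ∀ z ∈ s, r x y → r y z → r x z)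
    (hk : ∀ x ∈ s, #{y ∈ s | r x y} = k) : k ∣ #s := by
  classical
  have hclass : ∀ x ∈ s, ∀ y ∈ s, ({z ∈ s | r y z} = {z ∈ s | r x z} ↔ r x y) := by
    intro x hx y hy
    constructor
    · intro h
      have : y ∈ ({z ∈ s | r x z} : Finset ι) := h ▸ Finset.mem_filter.2 ⟨hy, refl y hy⟩
      exact (Finset.mem_filter.1 this).2
    · intro hxy
      ext z
      simp only [Finset.mem_filter, and_congr_right_iff]
      exact fun hz => ⟨trans x hx y hy z hz hxy, trans y hy x hx z hz (symm x hx y hy hxy)⟩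
  rw [Finset.card_eq_sum_card_image (fun x => {y ∈ s | r x y}) s, Finset.sum_const_nat]
  · exact dvd_mul_left k _
  · simp only [Finset.mem_image]
    rintro _ ⟨x, hx, rfl⟩
    rw [← hk x hx]
    congr 1
    ext y
    simp only [Finset.mem_filter, and_congr_right_iff]
    exact hclass x hx y

namespace Sym2

variable {α : Type*}

def Meets (e f : Sym2 α) : Prop := ∃ x, x ∈ e ∧ x ∈ f

theorem meets_refl (e : Sym2 α) : e.Meets e := ⟨e.out.1, e.out_fst_mem, e.out_fst_mem⟩

theorem Meets.symm {e f : Sym2 α} (h : e.Meets f) : f.Meets e :=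
  let ⟨x, he, hf⟩ := h; ⟨x, hf, he⟩

end Sym2

open Sym2 SimpleGraph

variable {α : Type*}

structure IsMeetTransitive (T : Set (Sym2 α)) : Prop where
  not_isDiag : ∀ e ∈ T, ¬e.IsDiag
  trans : ∀ ⦃e f g⦄, e ∈ T → f ∈ T → g ∈ T → e.Meets f → f.Meets g → e.Meets g

def IsPendantAt (T : Set (Sym2 α)) (e : Sym2 α) (c : α) : Prop :=
  c ∈ e ∧ ∀ f ∈ T, c ∈ f → f = e

def IsTriangleApex (T : Set (Sym2 α)) (e : Sym2 α) (c : α) : Prop :=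
  c ∉ e ∧ ∀ x ∈ e, s(x, c) ∈ T

section MeetTransitive

variable {T : Set (Sym2 α)} {e e' : Sym2 α} {a b c : α}

theorem IsPendantAt.not_isTriangleApex (hc : IsPendantAt T e c) (he' : ¬e'.IsDiag) :
    ¬IsTriangleApex T e' c := by
  intro h
  induction e' using Sym2.ind with | _ x y => ?_
  have hx := hc.2 _ (h.2 x (mem_mk_left x y)) (mem_mk_right x c)
  have hy := hc.2 _ (h.2 y (mem_mk_right x y)) (mem_mk_right y c)
  have hxy : s(x, c) = s(y, c) := hx.trans hy.symm
  rw [mk_isDiag_iff] at he'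
  rw [Sym2.eq_iff] at hxy
  rcases hxy with ⟨hxy, -⟩ | ⟨hxc, -⟩
  · exact he' hxy
  · exact h.1 (hxc ▸ mem_mk_left x y)

theorem IsTriangleApex.not_isPendantAt (hc : IsTriangleApex T e c) : ¬IsPendantAt T e a := by
  intro ha
  have := ha.2 _ (hc.2 a ha.1) (mem_mk_left a c)
  exact hc.1 (this ▸ mem_mk_right a c)

namespace IsMeetTransitive

theorem ne_of_mk_mem (hT : IsMeetTransitive T) (h : s(a, b) ∈ T) : a ≠ b := by
  simpa using hT.not_isDiag _ h

theorem exists_isPendantAt_or_isTriangleApex (hT : IsMeetTransitive T) (he : e ∈ T) :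
    (∃ c, IsPendantAt T e c) ∨ ∃ c, IsTriangleApex T e c := by
  induction e using Sym2.ind with | _ a b => ?_
  refine or_iff_not_imp_left.2 fun hpend => ?_
  push Not at hpend
  obtain ⟨f, hf, haf, hfe⟩ : ∃ f ∈ T, a ∈ f ∧ f ≠ s(a, b) := by
    simpa [IsPendantAt] using hpend a
  obtain ⟨g, hg, hbg, hge⟩ : ∃ g ∈ T, b ∈ g ∧ g ≠ s(a, b) := by
    simpa [IsPendantAt] using hpend b
  obtain ⟨c, rfl⟩ := mem_iff_exists.1 haf
  obtain ⟨d, rfl⟩ := mem_iff_exists.1 hbg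
  -- `s(a, c)` and `s(b, d)` meet through `s(a, b)`, which forces `c = d`.
  obtain ⟨x, hxf, hxg⟩ := hT.trans hf he hg ⟨a, mem_mk_left a c, mem_mk_left a b⟩
    ⟨b, mem_mk_right a b, mem_mk_left b d⟩
  have hab := hT.ne_of_mk_mem he
  have hac := hT.ne_of_mk_mem hf
  rw [mem_iff] at hxf hxg
  rcases hxf with rfl | rfl <;> rcases hxg with rfl | rfl
  · exact absurd rfl hab
  · exact absurd Sym2.eq_swap hge
  · exact absurd rfl hfe
  · refine ⟨x, by simpa [hac.symm] using fun h : x = b => hfe (h ▸ rfl), ?_⟩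
    simpa [mem_iff] using ⟨hf, hg⟩

theorem eq_of_isTriangleApex (hT : IsMeetTransitive T) (he : e ∈ T) (he' : e' ∈ T)
    (h : IsTriangleApex T e c) (h' : IsTriangleApex T e' c) : e = e' := by
  have subset {e e'} (he : e ∈ T) (h : IsTriangleApex T e c) (h' : IsTriangleApex T e' c)
      (x : α) (hx : x ∈ e') : x ∈ e := by
    obtain ⟨a, ha⟩ : ∃ a, a ∈ e := ⟨_, e.out_fst_mem⟩
    obtain ⟨y, hyx, hye⟩ := hT.trans (h'.2 x hx) (h.2 a ha) he
      ⟨c, mem_mk_right x c, mem_mk_right a c⟩ ⟨a, mem_mk_left a c, ha⟩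
    rcases mem_iff.1 hyx with rfl | rfl
    · exact hye
    · exact absurd hye h.1
  exact Sym2.ext fun x => ⟨subset he' h' h x, subset he h h' x⟩

theorem not_isTriangleApex_of_isPendantAt {w : α} (hT : IsMeetTransitive T)
    (he : s(c, w) ∈ T) (he' : e' ∈ T) (hc : IsPendantAt T s(c, w) c) :
    ¬IsTriangleApex T e' w := by
  intro h
  obtain ⟨x, hx⟩ : ∃ x, x ∈ e' := ⟨_, e'.out_fst_mem⟩
  obtain ⟨z, hze, hze'⟩ := hT.trans he (h.2 x hx) he'
    ⟨w, mem_mk_right c w, mem_mk_right x w⟩ ⟨x, mem_mk_left x w, hx⟩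
  rcases mem_iff.1 hze with rfl | rfl
  · exact h.1 (hc.2 e' he' hze' ▸ mem_mk_right z w)
  · exact h.1 hze'

theorem exists_injOn_isPendantAt_or_isTriangleApex (hT : IsMeetTransitive T) :
    ∃ φ : Sym2 α → α, Set.InjOn φ T ∧
      ∀ e ∈ T, IsPendantAt T e (φ e) ∨ IsTriangleApex T e (φ e) := by
  have : ∀ e, ∃ c, e ∈ T → IsPendantAt T e c ∨ IsTriangleApex T e c := fun e => by
    by_cases he : e ∈ T
    · rcases hT.exists_isPendantAt_or_isTriangleApex he with ⟨c, hc⟩ | ⟨c, hc⟩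
      exacts [⟨c, fun _ => .inl hc⟩, ⟨c, fun _ => .inr hc⟩]
    · exact ⟨e.out.1, fun h => absurd h he⟩
  choose φ hφ using this
  refine ⟨φ, fun e he e' he' heq => ?_, hφ⟩
  rcases hφ e he with h | h <;> rcases hφ e' he' with h' | h' <;> rw [← heq] at h'
  · exact (h.2 e' he' h'.1).symm
  · exact absurd h' (h.not_isTriangleApex (hT.not_isDiag e' he'))
  · exact absurd h (h'.not_isTriangleApex (hT.not_isDiag e he))
  · exact hT.eq_of_isTriangleApex he he' h h'

theorem ncard_le [Finite α] (hT : IsMeetTransitive T) : T.ncard ≤ Nat.card α := by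
  obtain ⟨φ, hφ, -⟩ := hT.exists_injOn_isPendantAt_or_isTriangleApex
  simpa using Set.ncard_le_ncard_of_injOn φ (fun _ _ => Set.mem_univ _) hφ

theorem ncard_lt_of_isPendantAt [Finite α] (hT : IsMeetTransitive T) (he : e ∈ T)
    (hc : IsPendantAt T e c) : T.ncard < Nat.card α := by
  obtain ⟨φ, hφ, hφT⟩ := hT.exists_injOn_isPendantAt_or_isTriangleApex
  have hφe : IsPendantAt T e (φ e) := (hφT e he).resolve_right fun h => h.not_isPendantAt hc
  obtain ⟨w, hew⟩ := mem_iff_exists.1 hφe.1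
  have hw : w ∉ φ '' T := by
    rintro ⟨f, hf, hfw⟩
    rcases hφT f hf with h | h <;> rw [hfw] at h
    · have hfe : e = f := h.2 e he (hew ▸ mem_mk_right _ w)
      exact hT.ne_of_mk_mem (hew ▸ he) (hfe ▸ hfw)
    · exact hT.not_isTriangleApex_of_isPendantAt (hew ▸ he) hf (hew ▸ hφe) h
  rw [← hφ.ncard_image, ← Set.ncard_univ]
  exact Set.ncard_lt_ncard (Set.ssubset_univ_iff.2 fun h => hw (h ▸ Set.mem_univ w))

theorem meets_iff_of_isTriangleApex {f : Sym2 α} (hT : IsMeetTransitive T) (he : s(a, b) ∈ T)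
    (hc : IsTriangleApex T s(a, b) c) (hf : f ∈ T) :
    s(a, b).Meets f ↔ f = s(a, b) ∨ f = s(a, c) ∨ f = s(b, c) := by
  have hab := hT.ne_of_mk_mem he
  have hac : s(a, c) ∈ T := hc.2 a (mem_mk_left a b)
  have hbc : s(b, c) ∈ T := hc.2 b (mem_mk_right a b)
  refine ⟨fun h => ?_, ?_⟩
  · have h₁ := hT.trans hf he hac h.symm ⟨a, mem_mk_left a b, mem_mk_left a c⟩
    have h₂ := hT.trans hf he hbc h.symm ⟨b, mem_mk_right a b, mem_mk_left b c⟩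
    have hf' := hT.not_isDiag f hf
    have hca : c ≠ a := fun h => hc.1 (h ▸ mem_mk_left a b)
    have hcb : c ≠ b := fun h => hc.1 (h ▸ mem_mk_right a b)
    induction f using Sym2.ind with | _ x y => ?_
    simp only [Meets, mem_iff, mk_isDiag_iff, Sym2.eq_iff] at h h₁ h₂ hf' ⊢
    grind
  · rintro (rfl | rfl | rfl)
    · exact meets_refl _
    · exact ⟨a, mem_mk_left a b, mem_mk_left a c⟩
    · exact ⟨b, mem_mk_right a b, mem_mk_left b c⟩

theorem three_dvd_ncard [Finite α] (hT : IsMeetTransitive T)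
    (hpend : ∀ e ∈ T, ∀ c, ¬IsPendantAt T e c) : 3 ∣ T.ncard := by
  classical
  have hfin : T.Finite := Set.toFinite T
  rw [← hfin.coe_toFinset, Set.ncard_coe_finset]
  refine Finset.dvd_card_of_card_filter_eq (s := hfin.toFinset) (r := Meets)
    (fun e _ => meets_refl e) (fun e _ f _ => Meets.symm)
    (fun e he f hf g hg => hT.trans (by simpa using he) (by simpa using hf) (by simpa using hg))
    fun e he => ?_
  rw [Set.Finite.mem_toFinset] at he
  induction e using Sym2.ind with | _ a b => ?_
  obtain ⟨c, hc⟩ := (hT.exists_isPendantAt_or_isTriangleApex he).resolve_left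
    fun ⟨c, h⟩ => hpend _ he c h
  have hab := hT.ne_of_mk_mem he
  have hca : c ≠ a := fun h => hc.1 (h ▸ mem_mk_left a b)
  have hcb : c ≠ b := fun h => hc.1 (h ▸ mem_mk_right a b)
  rw [Finset.card_eq_three]
  refine ⟨s(a, b), s(a, c), s(b, c), ?_, ?_, ?_, ?_⟩
  iterate 3 grind [Sym2.eq_iff]
  · ext f
    simp only [Finset.mem_filter, Set.Finite.mem_toFinset, Finset.mem_insert,
      Finset.mem_singleton]
    constructor
    · exact fun ⟨hf, h⟩ => (hT.meets_iff_of_isTriangleApex he hc hf).1 h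
    · rintro (rfl | rfl | rfl)
      exacts [⟨he, meets_refl _⟩, ⟨hc.2 a (mem_mk_left a b), a, mem_mk_left a b, mem_mk_left a c⟩,
        ⟨hc.2 b (mem_mk_right a b), b, mem_mk_right a b, mem_mk_left b c⟩]

theorem ncard_le_ite [Finite α] (hT : IsMeetTransitive T) :
    T.ncard ≤ if 3 ∣ Nat.card α then Nat.card α else Nat.card α - 1 := by
  have hle := hT.ncard_le
  split_ifs with h3
  · exact hle
  by_cases hpend : ∃ e ∈ T, ∃ c, IsPendantAt T e c
  · obtain ⟨e, he, c, hc⟩ := hpend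
    have := hT.ncard_lt_of_isPendantAt he hc
    omega
  · push Not at hpend
    have := hT.three_dvd_ncard hpend
    have : T.ncard ≠ Nat.card α := fun h => h3 (h ▸ this)
    omega

end IsMeetTransitive

end MeetTransitive

namespace SimpleGraph

theorem IsGPSet.isMeetTransitive_image_val {S : Set (⊤ : SimpleGraph α).edgeSet}
    (hS : (⊤ : SimpleGraph α).lineGraph.IsGPSet S) : IsMeetTransitive (Subtype.val '' S) where
  not_isDiag := by
    rintro _ ⟨e, -, rfl⟩
    exact not_isDiag_of_mem_edgeSet _ e.2
  trans := by
    rintro _ _ _ ⟨e, he, rfl⟩ ⟨f, hf, rfl⟩ ⟨g, hg, rfl⟩ hef hfg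
    by_cases heg : e = g
    · exact heg ▸ meets_refl _
    rcases eq_or_ne e f with rfl | hef'
    · exact hfg
    rcases eq_or_ne f g with rfl | hfg'
    · exact hef
    have hadj := hS.adj_of_adj_of_adj he hg hf heg (lineGraph_adj_iff_exists.2 ⟨hef', hef⟩)
      (lineGraph_adj_iff_exists.2 ⟨hfg', hfg⟩)
    exact (lineGraph_adj_iff_exists.1 hadj).2

theorem ncard_le_of_isGPSet_lineGraph_top [Finite α] {S : Set (⊤ : SimpleGraph α).edgeSet}
    (hS : (⊤ : SimpleGraph α).lineGraph.IsGPSet S) :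
    S.ncard ≤ if 3 ∣ Nat.card α then Nat.card α else Nat.card α - 1 := by
  rw [← Set.ncard_image_of_injective S Subtype.val_injective]
  exact hS.isMeetTransitive_image_val.ncard_le_ite

theorem isGPSet_lineGraph_top_of_meets {S : Set (⊤ : SimpleGraph α).edgeSet}
    (hS : ∀ e ∈ S, ∀ f ∈ S, ∀ g ∈ S, (e : Sym2 α).Meets f → (f : Sym2 α).Meets g →
      (e : Sym2 α).Meets g) :
    (⊤ : SimpleGraph α).lineGraph.IsGPSet S :=
  isGPSet_of_forall_dist_le_two dist_lineGraph_top_le_two fun e g f he hg hf heg hef hfg =>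
    lineGraph_adj_iff_exists.2 ⟨heg, hS e he f hf g hg (lineGraph_adj_iff_exists.1 hef).2
      (lineGraph_adj_iff_exists.1 hfg).2⟩

theorem isGPSet_lineGraph_top_setOf_mem (v : α) :
    (⊤ : SimpleGraph α).lineGraph.IsGPSet {e | v ∈ (e : Sym2 α)} :=
  isGPSet_lineGraph_top_of_meets fun _ he _ _ _ hg _ _ => ⟨v, he, hg⟩

theorem ncard_setOf_mem_edgeSet_top [Fintype α] [DecidableEq α] (v : α) :
    {e : (⊤ : SimpleGraph α).edgeSet | v ∈ (e : Sym2 α)}.ncard = Fintype.card α - 1 := by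
  have : {e : (⊤ : SimpleGraph α).edgeSet | v ∈ (e : Sym2 α)} =
      Subtype.val ⁻¹' (⊤ : SimpleGraph α).incidenceSet v := by
    ext e
    simpa [incidenceSet] using fun _ => not_isDiag_of_mem_edgeSet _ e.2
  rw [this, Set.ncard_preimage_of_injective_subset_range Subtype.val_injective
    (Subtype.range_val ▸ incidenceSet_subset _ v), ← Nat.card_coe_set_eq,
    Nat.card_eq_fintype_card, card_incidenceSet_eq_degree, complete_graph_degree]

end SimpleGraph

section Triangles

variable {n : ℕ}

/-- The edge from `x` to its cyclic successor in the block `{3i, 3i+1, 3i+2}` containing it;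
every edge of the triangles on these blocks arises exactly once. -/
def blockEdge (hn : 3 ∣ n) (x : Fin n) : (⊤ : SimpleGraph (Fin n)).edgeSet :=
  ⟨s(x, ⟨3 * (x / 3) + (x + 1) % 3, by omega⟩), by simp [Fin.ext_iff]; omega⟩

theorem blockEdge_injective (hn : 3 ∣ n) : Function.Injective (blockEdge hn) := by
  intro x y h
  simp only [blockEdge, Subtype.mk.injEq, Sym2.eq_iff, Fin.ext_iff] at h
  ext
  omega

theorem meets_blockEdge_iff (hn : 3 ∣ n) {x y : Fin n} :
    (blockEdge hn x : Sym2 (Fin n)).Meets (blockEdge hn y) ↔ (x : ℕ) / 3 = y / 3 := by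
  simp only [blockEdge, Meets, mem_iff, Fin.ext_iff]
  constructor
  · rintro ⟨z, hx, hy⟩
    omega
  · intro h
    rcases eq_or_ne (y : ℕ) (3 * (x / 3) + (x + 1) % 3) with hy | hy
    · exact ⟨y, .inr hy, .inl rfl⟩
    · exact ⟨x, .inl rfl, by omega⟩

theorem isGPSet_range_blockEdge (hn : 3 ∣ n) :
    (⊤ : SimpleGraph (Fin n)).lineGraph.IsGPSet (Set.range (blockEdge hn)) := by
  refine isGPSet_lineGraph_top_of_meets ?_
  rintro _ ⟨x, rfl⟩ _ ⟨y, rfl⟩ _ ⟨z, rfl⟩ hxy hyz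
  rw [meets_blockEdge_iff] at hxy hyz ⊢
  exact hxy.trans hyz

end Triangles

theorem gpNumber_lineGraph_completeGraph_general (n : ℕ) :
    (⊤ : SimpleGraph (Fin n)).lineGraph.gpNumber = if 3 ∣ n then n else n - 1 := by
  refine gpNumber_eq_of_exists_of_forall_le ?_ fun S hS => by
    simpa using ncard_le_of_isGPSet_lineGraph_top hS
  split_ifs with h3
  · refine ⟨_, isGPSet_range_blockEdge h3, ?_⟩
    simpa using Set.ncard_range_of_injective (blockEdge_injective h3)
  · have hn : 0 < n := by omega
    refine ⟨_, isGPSet_lineGraph_top_setOf_mem ⟨0, hn⟩, ?_⟩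
    simpa using ncard_setOf_mem_edgeSet_top (⟨0, hn⟩ : Fin n)

/-- For every `n ≥ 3`, the general position number of the line graph of the
complete graph `K_n` equals `n` if `3 ∣ n`, and `n - 1` otherwise. -/
theorem gpNumber_lineGraph_completeGraph (n : ℕ) (hn : 3 ≤ n) :
    (⊤ : SimpleGraph (Fin n)).lineGraph.gpNumber = if 3 ∣ n then n else n - 1 :=
  gpNumber_lineGraph_completeGraph_general n
end
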